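/- Let n ≥ 2, let β_1,…,β_{n−1} ∈ (0,1], and let A_1 be the n×n real matrix with (A_1)_{st} = 1 if s = t or t = n, (A_1)_{st} = −β_t^{-1} if s > t and t < n, and (A_1)_{st} = 0 otherwise. Perform GE on A_1 with the diagonal pivots (1,1), …, (n−1,n−1). Then the pivoting mistakes accumulate multiplicatively: for every 1 ≤ k ≤ n−1 the intermediate growth factor satisfies ρ_k(A_1) ≥ (∏_{r=1}^{k} (1 + β_r^{-1})) / (max_{1 ≤ r ≤ n−1} β_r^{-1}), and for k = n−1 equality holds: ρ_{n−1}(A_1) = (∏_{r=1}^{n−1} (1 + β_r^{-1})) / (max_{1 ≤ r ≤ n−1} β_r^{-1}). -/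

import Mathlib

open Finset Real

/-- One Gaussian elimination step on `A` with pivot position `(i, j)`:
`A_{st} - A_{sj} A_{it} / A_{ij}`. -/
noncomputable def geStep {m n : ℕ} (A : Matrix (Fin m) (Fin n) ℝ) (i : Fin m) (j : Fin n) :
    Matrix (Fin m) (Fin n) ℝ :=
  Matrix.of fun s t => A s t - A s j * A i t / A i j

/-- The matrix `A^{(r)}` after `r` GE steps on `A`, where step `r` uses pivot
position `piv (r - 1)` (so `piv` is 0-indexed). -/
noncomputable def geIter {m n : ℕ} (A : Matrix (Fin m) (Fin n) ℝ)
    (piv : ℕ → Fin m × Fin n) : ℕ → Matrix (Fin m) (Fin n) ℝ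
  | 0 => A
  | r + 1 => geStep (geIter A piv r) (piv r).1 (piv r).2

/-- Maximum absolute entry of a matrix. -/
noncomputable def maxAbs {m n : ℕ} (A : Matrix (Fin m) (Fin n) ℝ) : ℝ :=
  ⨆ s, ⨆ t, |A s t|

/-- The magnitude `p_r = |A^{(r-1)}_{i_r j_r}|` of the `r`-th pivot (1-indexed `r`). -/
noncomputable def pivMag {m n : ℕ} (A : Matrix (Fin m) (Fin n) ℝ)
    (piv : ℕ → Fin m × Fin n) (r : ℕ) : ℝ :=
  |geIter A piv (r - 1) (piv (r - 1)).1 (piv (r - 1)).2|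

/-- Modified Wilkinson matrix `A₁`: `(A₁)_{st} = 1` if `s = t` or `t = n` (1-based),
`(A₁)_{st} = -β_t⁻¹` if `s > t` and `t < n`, and `0` otherwise. Here indices are
0-based, so column `t` (0-based) corresponds to `β (t+1)`. -/
noncomputable def wilkA1 (n : ℕ) (β : ℕ → ℝ) : Matrix (Fin n) (Fin n) ℝ :=
  Matrix.of fun s t =>
    if (s : ℕ) = (t : ℕ) ∨ (t : ℕ) = n - 1 then 1
    else if (t : ℕ) < (s : ℕ) then -(β ((t : ℕ) + 1))⁻¹ else 0

/-- Diagonal pivot positions `(1,1), (2,2), …` (0-based: `(r, r)` at step `r + 1`). -/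
def diagPiv (n : ℕ) (hn : 0 < n) : ℕ → Fin n × Fin n :=
  fun r => (⟨min r (n - 1), by omega⟩, ⟨min r (n - 1), by omega⟩)

/-!
With the unit pivot `(k, k)`, the `k`-th elimination step subtracts `A_{sk}` times row `k` from
each row `s`. Row `k` of `A₁^{(k)}` is zero except for its pivot `1` and its last entry, so the
step clears column `k` (row `k` included, under this update rule) and adds `β_{k+1}⁻¹` times the
last entry of row `k` to the last entry of every lower row. Hence every row `s ≥ k` of
`A₁^{(k)}` ends in `∏_{r ≤ k} (1 + β_r⁻¹)`, and this is the only nonzero entry of `A₁^{(n-1)}`.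
The largest entry of `A₁` itself is `max_r β_r⁻¹ ≥ 1`.
-/

lemma abs_le_maxAbs {m n : ℕ} (A : Matrix (Fin m) (Fin n) ℝ) (s : Fin m) (t : Fin n) :
    |A s t| ≤ maxAbs A :=
  (le_ciSup (f := fun t' => |A s t'|) (Set.finite_range _).bddAbove t).trans
    (le_ciSup (f := fun s' => ⨆ t', |A s' t'|) (Set.finite_range _).bddAbove s)

lemma maxAbs_eq_of_forall_abs_le {m n : ℕ} {A : Matrix (Fin m) (Fin n) ℝ} {v : ℝ}
    (hle : ∀ s t, |A s t| ≤ v) (s₀ : Fin m) (t₀ : Fin n) (heq : |A s₀ t₀| = v) :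
    maxAbs A = v := by
  have : Nonempty (Fin m) := ⟨s₀⟩
  have : Nonempty (Fin n) := ⟨t₀⟩
  refine le_antisymm (ciSup_le fun s => ciSup_le fun t => hle s t) ?_
  exact heq ▸ abs_le_maxAbs A s₀ t₀

lemma geIter_diagPiv_succ {n : ℕ} (hn : 0 < n) (A : Matrix (Fin n) (Fin n) ℝ) {k : ℕ}
    (hk : k < n) :
    geIter A (diagPiv n hn) (k + 1) = geStep (geIter A (diagPiv n hn) k) ⟨k, hk⟩ ⟨k, hk⟩ := by
  have hpiv : diagPiv n hn k = (⟨k, hk⟩, ⟨k, hk⟩) := by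
    simp only [diagPiv, Prod.mk.injEq, Fin.mk.injEq, and_self]
    omega
  rw [geIter, hpiv]

/-- Closed form of the GE iterate `A₁^{(k)}` with diagonal pivots. -/
noncomputable def wilkA1Iter (n : ℕ) (β : ℕ → ℝ) (k : ℕ) : Matrix (Fin n) (Fin n) ℝ :=
  Matrix.of fun s t =>
    if (s : ℕ) < k then 0
    else if (t : ℕ) = n - 1 then ∏ r ∈ Icc 1 k, (1 + (β r)⁻¹)
    else if (s : ℕ) = t then 1
    else if k ≤ (t : ℕ) ∧ (t : ℕ) < s then -(β ((t : ℕ) + 1))⁻¹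
    else 0

lemma wilkA1Iter_zero (n : ℕ) (β : ℕ → ℝ) : wilkA1Iter n β 0 = wilkA1 n β := by
  ext s t
  simp only [wilkA1Iter, wilkA1, Matrix.of_apply]
  split_ifs <;> first | rfl | omega

lemma wilkA1Iter_last_last (n : ℕ) (β : ℕ → ℝ) {k : ℕ} (hk : k < n) :
    wilkA1Iter n β k ⟨n - 1, by omega⟩ ⟨n - 1, by omega⟩ = ∏ r ∈ Icc 1 k, (1 + (β r)⁻¹) := by
  simp only [wilkA1Iter, Matrix.of_apply]
  rw [if_neg (by omega), if_pos trivial]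

lemma geStep_wilkA1Iter (n : ℕ) (β : ℕ → ℝ) {k : ℕ} (hk : k + 1 < n) :
    geStep (wilkA1Iter n β k) ⟨k, by omega⟩ ⟨k, by omega⟩ = wilkA1Iter n β (k + 1) := by
  set A := wilkA1Iter n β k
  have hpivot : A ⟨k, by omega⟩ ⟨k, by omega⟩ = 1 := by
    simp only [A, wilkA1Iter, Matrix.of_apply]
    split_ifs <;> first | rfl | omega
  have hrow : ∀ t : Fin n, A ⟨k, by omega⟩ t =
      if (t : ℕ) = n - 1 then ∏ r ∈ Icc 1 k, (1 + (β r)⁻¹) else if (t : ℕ) = k then 1 else 0 := by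
    intro t
    simp only [A, wilkA1Iter, Matrix.of_apply]
    split_ifs <;> first | rfl | omega
  have hcol : ∀ s : Fin n, A s ⟨k, by omega⟩ =
      if (s : ℕ) < k then 0 else if (s : ℕ) = k then 1 else -(β (k + 1))⁻¹ := by
    intro s
    simp only [A, wilkA1Iter, Matrix.of_apply, if_neg (show k ≠ n - 1 by omega)]
    split_ifs <;> first | rfl | omega
  have hprod : ∏ r ∈ Icc 1 (k + 1), (1 + (β r)⁻¹) =
      (∏ r ∈ Icc 1 k, (1 + (β r)⁻¹)) * (1 + (β (k + 1))⁻¹) :=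
    prod_Icc_succ_top (by omega) _
  ext s t
  simp only [geStep, Matrix.of_apply, hpivot, hrow, hcol]
  simp only [A, wilkA1Iter, Matrix.of_apply, hprod]
  split_ifs <;> first | omega | ring1 | (rw [show (t : ℕ) = k by omega]; ring1)

lemma geIter_wilkA1 {n : ℕ} (hn : 0 < n) (β : ℕ → ℝ) {k : ℕ} (hk : k < n) :
    geIter (wilkA1 n β) (diagPiv n hn) k = wilkA1Iter n β k := by
  induction k with
  | zero => exact (wilkA1Iter_zero n β).symm
  | succ k ih =>
    rw [geIter_diagPiv_succ hn _ (by omega), ih (by omega), geStep_wilkA1Iter n β hk]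

lemma maxAbs_wilkA1Iter_pred {n : ℕ} (hn : 0 < n) {β : ℕ → ℝ}
    (hβ : ∀ r, 1 ≤ r → r ≤ n - 1 → 0 < β r) :
    maxAbs (wilkA1Iter n β (n - 1)) = ∏ r ∈ Icc 1 (n - 1), (1 + (β r)⁻¹) := by
  have hprod : 0 ≤ ∏ r ∈ Icc 1 (n - 1), (1 + (β r)⁻¹) :=
    prod_nonneg fun r hr => by
      have := (hβ r (mem_Icc.mp hr).1 (mem_Icc.mp hr).2).le
      positivity
  refine maxAbs_eq_of_forall_abs_le (fun s t => ?_) ⟨n - 1, by omega⟩ ⟨n - 1, by omega⟩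
    (by rw [wilkA1Iter_last_last n β (by omega), abs_of_nonneg hprod])
  have := s.isLt
  simp only [wilkA1Iter, Matrix.of_apply]
  split_ifs <;> first | omega | simp [abs_of_nonneg hprod, hprod]

lemma maxAbs_wilkA1 {n : ℕ} (hne : (Icc 1 (n - 1)).Nonempty) {β : ℕ → ℝ}
    (hβ : ∀ r, 1 ≤ r → r ≤ n - 1 → 0 < β r ∧ β r ≤ 1) :
    maxAbs (wilkA1 n β) = (Icc 1 (n - 1)).sup' hne (fun r => (β r)⁻¹) := by
  have hn : 2 ≤ n := by have := nonempty_Icc.mp hne; omega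
  set M := (Icc 1 (n - 1)).sup' hne (fun r => (β r)⁻¹)
  have hle : ∀ r, 1 ≤ r → r ≤ n - 1 → (β r)⁻¹ ≤ M := fun r h1 h2 =>
    le_sup' (fun r => (β r)⁻¹) (mem_Icc.mpr ⟨h1, h2⟩)
  have hM : 1 ≤ M :=
    ((one_le_inv₀ (hβ 1 le_rfl (by omega)).1).mpr (hβ 1 le_rfl (by omega)).2).trans
      (hle 1 le_rfl (by omega))
  obtain ⟨r₀, hr₀, hM_eq⟩ := exists_mem_eq_sup' hne (fun r => (β r)⁻¹)
  rw [mem_Icc] at hr₀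
  refine maxAbs_eq_of_forall_abs_le (fun s t => ?_) ⟨r₀, by omega⟩ ⟨r₀ - 1, by omega⟩ ?_
  · have := s.isLt
    simp only [wilkA1, Matrix.of_apply]
    split_ifs
    · simpa using hM
    · rw [abs_neg, abs_of_pos (inv_pos.mpr (hβ _ (by omega) (by omega)).1)]
      exact hle _ (by omega) (by omega)
    · simpa using zero_le_one.trans hM
  · simp only [wilkA1, Matrix.of_apply]
    rw [if_neg (by omega), if_pos (by omega), Nat.sub_add_cancel hr₀.1, abs_neg,
      abs_of_pos (inv_pos.mpr (hβ r₀ hr₀.1 hr₀.2).1)]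
    exact hM_eq.symm

/-- **Partial pivoting does not correct pivoting mistakes.** Performing GE on `A₁` with
the diagonal pivots, for every `1 ≤ k ≤ n-1` the intermediate growth factor satisfies
`ρ_k(A₁) ≥ (∏_{r=1}^k (1 + β_r⁻¹)) / max_{1 ≤ r ≤ n-1} β_r⁻¹`, with equality at
`k = n - 1`. -/
theorem wilkA1_growth_factors
    (n : ℕ) (hn : 2 ≤ n) (β : ℕ → ℝ)
    (hβ : ∀ r, 1 ≤ r → r ≤ n - 1 → 0 < β r ∧ β r ≤ 1) :
    (∀ k, 1 ≤ k → k ≤ n - 1 →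
      maxAbs (geIter (wilkA1 n β) (diagPiv n (by omega)) k) / maxAbs (wilkA1 n β) ≥
        (∏ r ∈ Finset.Icc 1 k, (1 + (β r)⁻¹)) /
          (Finset.Icc 1 (n - 1)).sup' (Finset.nonempty_Icc.mpr (by omega))
            (fun r => (β r)⁻¹)) ∧
    maxAbs (geIter (wilkA1 n β) (diagPiv n (by omega)) (n - 1)) / maxAbs (wilkA1 n β) =
      (∏ r ∈ Finset.Icc 1 (n - 1), (1 + (β r)⁻¹)) /
        (Finset.Icc 1 (n - 1)).sup' (Finset.nonempty_Icc.mpr (by omega))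
          (fun r => (β r)⁻¹) := by
  have hmax := maxAbs_wilkA1 (nonempty_Icc.mpr (by omega)) hβ
  refine ⟨fun k _ hk => ?_, ?_⟩
  · have hlast := abs_le_maxAbs (wilkA1Iter n β k) ⟨n - 1, by omega⟩ ⟨n - 1, by omega⟩
    rw [wilkA1Iter_last_last n β (by omega)] at hlast
    have hden : 0 ≤ maxAbs (wilkA1 n β) :=
      (abs_nonneg _).trans (abs_le_maxAbs _ ⟨0, by omega⟩ ⟨0, by omega⟩)
    rw [geIter_wilkA1 _ β (by omega), ← hmax]
    exact div_le_div_of_nonneg_right ((le_abs_self _).trans hlast) hden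
  · rw [geIter_wilkA1 _ β (by omega), maxAbs_wilkA1Iter_pred (by omega) fun r h1 h2 =>
      (hβ r h1 h2).1, hmax]
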